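/- Let A ⊆ X_i^* be computably enumerable and let g : A → X_2^* be a Gödel numbering. Then there exists a constant d such that for all u ∈ A, |δ_g(u) − log_2(i)·δ_i(u)| ≤ d. -/

import Mathlib

open scoped ENNReal

/-- Finite strings over an alphabet with `i` letters. -/
abbrev Str (i : ℕ) : Type := List (Fin i)

/-- A set of strings is prefix-free: no element is a proper prefix of another. -/
def PrefixFree {i : ℕ} (S : Set (Str i)) : Prop :=
  ∀ x ∈ S, ∀ y ∈ S, x <+: y → x = y

/-- A self-delimiting machine over the alphabet with `i` letters: a partial computable
function on strings whose domain is prefix-free. -/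
structure Machine (i : ℕ) where
  f : Str i →. Str i
  partrec : Partrec f
  prefixFree : PrefixFree f.Dom

/-- Program-size complexity of `x` relative to the machine `T`:
the least length of a program `y` with `T(y) = x` (with `min ∅ = ∞`). -/
noncomputable def Hc {i : ℕ} (T : Machine i) (x : Str i) : ℝ≥0∞ :=
  sInf {n : ℝ≥0∞ | ∃ y : Str i, (y.length : ℝ≥0∞) = n ∧ x ∈ T.f y}

/-- `U` is a universal machine: it minimizes program-size complexity up to an
additive constant among all machines. -/
def IsUniversal {i : ℕ} (U : Machine i) : Prop :=
  ∀ T : Machine i, ∃ c : ℕ, ∀ x : Str i, Hc U x ≤ Hc T x + (c : ℝ≥0∞)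

/-- A set of strings is computably enumerable if it is the domain of a
partial computable function. -/
def CEset {i : ℕ} (A : Set (Str i)) : Prop :=
  ∃ f : Str i →. Str i, Partrec f ∧ A = f.Dom

/-- A Gödel numbering for `L`: a computable function into binary strings,
injective on `L`. -/
def GoedelNumbering {i : ℕ} (L : Set (Str i)) (g : Str i → Str 2) : Prop :=
  Computable g ∧ Set.InjOn g L

/-- `δ_g(x) = H₂(g(x)) − ⌈log₂(i)·|x|ᵢ⌉`, as an extended real. -/
noncomputable def deltaG {i : ℕ} (U2 : Machine 2) (g : Str i → Str 2) (x : Str i) : EReal :=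
  (Hc U2 (g x) : EReal) - ((⌈Real.logb 2 i * (x.length : ℝ)⌉ : ℝ) : EReal)

/-- `δᵢ(x) = Hᵢ(x) − |x|ᵢ`, as an extended real. -/
noncomputable def deltaI {i : ℕ} (U : Machine i) (x : Str i) : EReal :=
  (Hc U x : EReal) - ((x.length : ℝ) : EReal)

/-!
Arithmetic coding turns a program `p` over an `a`-letter alphabet into a program over a
`b`-letter alphabet of length `⌈log_b (2 a ^ |p|)⌉` whose `b`-adic interval lies inside the
`a`-adic interval of `p`. Nested intervals mean prefixes, so the codes of a prefix-free set are
prefix-free and a machine over `b` letters can simulate any machine over `a` letters on codes.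
Simulating `Uᵢ` followed by `g`, and `U₂` followed by the inverse of `g` on `A` (computable by a
dovetailed search, `A` being c.e.), gives `H₂(g u) ≤ log₂ i · Hᵢ(u) + O(1)` and
`log₂ i · Hᵢ(u) ≤ H₂(g u) + O(1)`; subtracting `log₂ i · |u|`, respectively its ceiling, gives
the bounds on `δ`.
-/

section Digits

variable {b : ℕ}

def strVal (x : Str b) : ℕ := x.foldl (fun n d => n * b + d.val) 0

lemma foldl_strVal (x : Str b) (n : ℕ) :
    x.foldl (fun n d => n * b + d.val) n = n * b ^ x.length + strVal x := by
  induction x generalizing n with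
  | nil => simp [strVal]
  | cons d x ih =>
    simp only [List.foldl_cons, List.length_cons, strVal]
    rw [ih, ih (0 * b + d.val)]
    ring

lemma strVal_append (x z : Str b) : strVal (x ++ z) = strVal x * b ^ z.length + strVal z := by
  simp only [strVal, List.foldl_append]
  exact foldl_strVal z _

lemma strVal_singleton (d : Fin b) : strVal [d] = d.val := by
  simp [strVal]

lemma strVal_lt (x : Str b) : strVal x < b ^ x.length := by
  induction x using List.reverseRecOn with
  | nil => simp [strVal]
  | append_singleton x d ih =>
    rw [strVal_append, strVal_singleton, List.length_append, List.length_singleton, pow_one,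
      pow_succ]
    nlinarith [d.isLt]

lemma primrec_strVal : Primrec (strVal (b := b)) :=
  (Primrec.list_foldl Primrec.id (Primrec.const 0)
    (Primrec.nat_add.comp (Primrec.nat_mul.comp (Primrec.fst.comp Primrec.snd) (Primrec.const b))
      (Primrec.fin_val.comp (Primrec.snd.comp Primrec.snd))).to₂).of_eq fun _ => rfl

lemma primrec_pow : Primrec₂ ((· ^ ·) : ℕ → ℕ → ℕ) :=
  Primrec₂.unpaired'.1 Nat.Primrec.pow

variable [NeZero b]

/-- Only the last `L` base-`b` digits of `N` are kept. -/
def natToStr (b : ℕ) [NeZero b] : ℕ → ℕ → Str b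
  | 0, _ => []
  | L + 1, N => natToStr b L (N / b) ++ [⟨N % b, Nat.mod_lt _ (NeZero.pos b)⟩]

@[simp] lemma length_natToStr (L N : ℕ) : (natToStr b L N).length = L := by
  induction L generalizing N with
  | zero => rfl
  | succ L ih => simp [natToStr, ih]

lemma strVal_natToStr {L N : ℕ} (h : N < b ^ L) : strVal (natToStr b L N) = N := by
  induction L generalizing N with
  | zero => simp_all [natToStr, strVal]
  | succ L ih =>
    have hdiv : N / b < b ^ L := Nat.div_lt_of_lt_mul (by rwa [mul_comm, ← pow_succ])
    rw [natToStr, strVal_append, ih hdiv, strVal_singleton, List.length_singleton, pow_one,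
      Nat.div_add_mod']

lemma natToStr_strVal (x : Str b) : natToStr b x.length (strVal x) = x := by
  induction x using List.reverseRecOn with
  | nil => rfl
  | append_singleton x d ih =>
    have hdiv : (strVal x * b + d) / b = strVal x := by
      rw [mul_comm, Nat.mul_add_div (NeZero.pos b), Nat.div_eq_of_lt d.isLt, add_zero]
    have hmod : (strVal x * b + d) % b = d := by
      rw [Nat.mul_add_mod_self_right, Nat.mod_eq_of_lt d.isLt]
    rw [List.length_append, List.length_singleton, natToStr, strVal_append, strVal_singleton,
      List.length_singleton, pow_one, hdiv, ih]
    simp only [hmod]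

lemma eq_of_strVal_eq {x y : Str b} (hl : x.length = y.length) (hv : strVal x = strVal y) :
    x = y := by
  rw [← natToStr_strVal x, ← natToStr_strVal y, hl, hv]

lemma prefix_of_strVal {x y : Str b} (hl : x.length ≤ y.length)
    (h₁ : strVal x * b ^ (y.length - x.length) ≤ strVal y)
    (h₂ : strVal y < (strVal x + 1) * b ^ (y.length - x.length)) : x <+: y := by
  set t := y.take x.length
  have hyt : t ++ y.drop x.length = y := List.take_append_drop _ _
  have hlen : (y.drop x.length).length = y.length - x.length := List.length_drop
  have hval : strVal y / b ^ (y.length - x.length) = strVal t := by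
    have hy := strVal_append t (y.drop x.length)
    rw [hyt, hlen] at hy
    rw [hy, mul_comm, Nat.mul_add_div (pow_pos (NeZero.pos b) _),
      Nat.div_eq_of_lt (hlen ▸ strVal_lt (y.drop x.length)), add_zero]
  have htx : t = x :=
    eq_of_strVal_eq (by simp [t, hl]) (hval ▸ Nat.div_eq_of_lt_le h₁ h₂)
  exact ⟨_, htx ▸ hyt⟩

end Digits

section Cylinder

variable {b : ℕ} [NeZero b]

lemma cast_pow_pos (n : ℕ) : (0 : ℚ) < (b : ℚ) ^ n :=
  pow_pos (Nat.cast_pos.2 (NeZero.pos b)) n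

/-- The rationals in `[0, 1)` whose base-`b` expansion starts with the digits `x`. -/
def cyl (x : Str b) : Set ℚ :=
  Set.Ico (strVal x / b ^ x.length) ((strVal x + 1) / b ^ x.length)

lemma left_mem_cyl (x : Str b) : (strVal x / b ^ x.length : ℚ) ∈ cyl x :=
  Set.left_mem_Ico.2 (div_lt_div_of_pos_right (lt_add_one _) (cast_pow_pos _))

lemma cyl_subset_of_prefix {x y : Str b} (h : x <+: y) : cyl y ⊆ cyl x := by
  obtain ⟨z, rfl⟩ := h
  have hz : (strVal z + 1 : ℚ) ≤ b ^ z.length := by exact_mod_cast strVal_lt z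
  have hb := cast_pow_pos (b := b) x.length
  apply Set.Ico_subset_Ico
  · rw [div_le_div_iff₀ hb (cast_pow_pos _)]
    simp only [strVal_append, List.length_append, pow_add]
    push_cast
    nlinarith [(Nat.cast_nonneg (strVal z) : (0 : ℚ) ≤ _)]
  · rw [div_le_div_iff₀ (cast_pow_pos _) hb]
    simp only [strVal_append, List.length_append, pow_add]
    push_cast
    nlinarith

lemma prefix_of_cyl_inter {x y : Str b} (hl : x.length ≤ y.length)
    (h : (cyl x ∩ cyl y).Nonempty) : x <+: y := by
  obtain ⟨q, ⟨hx₁, hx₂⟩, ⟨hy₁, hy₂⟩⟩ := h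
  set k := y.length - x.length
  have hsplit : (b : ℚ) ^ y.length = b ^ x.length * b ^ k := by
    rw [← pow_add, Nat.add_sub_cancel' hl]
  have hb := cast_pow_pos (b := b) x.length
  have h₁ : (strVal x * b ^ k : ℚ) < strVal y + 1 := by
    have := hx₁.trans_lt hy₂
    rw [div_lt_div_iff₀ hb (cast_pow_pos _), hsplit] at this
    nlinarith
  have h₂ : (strVal y : ℚ) < (strVal x + 1) * b ^ k := by
    have := hy₁.trans_lt hx₂
    rw [div_lt_div_iff₀ (cast_pow_pos _) hb, hsplit] at this
    nlinarith
  exact prefix_of_strVal hl (Nat.lt_succ_iff.1 (by exact_mod_cast h₁)) (by exact_mod_cast h₂)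

lemma prefix_or_prefix_of_cyl_inter {x y : Str b} (h : (cyl x ∩ cyl y).Nonempty) :
    x <+: y ∨ y <+: x := by
  rcases le_total x.length y.length with hl | hl
  · exact .inl (prefix_of_cyl_inter hl h)
  · exact .inr (prefix_of_cyl_inter hl (Set.inter_comm _ _ ▸ h))

end Cylinder

section Encoding

variable {a b : ℕ}

def encLen (a b m : ℕ) : ℕ := Nat.clog b (2 * a ^ m)

def encVal (a b : ℕ) (p : Str a) : ℕ := strVal p * b ^ encLen a b p.length / a ^ p.length + 1

/-- Arithmetic coding of base-`a` strings by base-`b` strings: `encStr a b p` is a string whose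
cylinder lies inside the cylinder of `p`. It has length `⌈log_b (2 a ^ |p|)⌉`, the factor `2`
leaving room for a whole cylinder of that length inside `cyl p`. -/
def encStr (a b : ℕ) [NeZero b] (p : Str a) : Str b :=
  natToStr b (encLen a b p.length) (encVal a b p)

lemma le_pow_encLen (hb : 1 < b) (m : ℕ) : 2 * a ^ m ≤ b ^ encLen a b m :=
  Nat.le_pow_clog hb _

lemma encVal_add_one_mul_le (hb : 1 < b) (p : Str a) :
    (encVal a b p + 1) * a ^ p.length ≤ (strVal p + 1) * b ^ encLen a b p.length := by
  have h₁ := Nat.div_mul_le_self (strVal p * b ^ encLen a b p.length) (a ^ p.length)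
  have h₂ := le_pow_encLen (a := a) hb p.length
  rw [encVal]
  linarith

variable [NeZero b] in
@[simp] lemma length_encStr (p : Str a) : (encStr a b p).length = encLen a b p.length :=
  length_natToStr _ _

variable [NeZero a]

lemma one_lt_two_mul_pow (m : ℕ) : 1 < 2 * a ^ m := by
  have := pow_pos (NeZero.pos a) m
  omega

lemma encLen_eq_iff (hb : 1 < b) {m L : ℕ} :
    encLen a b m = L ↔ 2 * a ^ m ≤ b ^ L ∧ b ^ (L - 1) < 2 * a ^ m := by
  have hpos : 0 < encLen a b m := Nat.clog_pos hb (one_lt_two_mul_pow m)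
  constructor
  · rintro rfl
    exact ⟨le_pow_encLen hb m, Nat.pow_pred_clog_lt_self hb (one_lt_two_mul_pow m)⟩
  · rintro ⟨h₁, h₂⟩
    have hL : L ≠ 0 := by
      rintro rfl
      have := one_lt_two_mul_pow (a := a) m
      rw [pow_zero] at h₁
      omega
    have hle : encLen a b m ≤ L := (Nat.clog_le_iff_le_pow hb).2 h₁
    have hlt : L - 1 < encLen a b m := (Nat.lt_clog_iff_pow_lt hb).2 h₂
    omega

lemma strVal_mul_lt_encVal_mul (p : Str a) :
    strVal p * b ^ encLen a b p.length < encVal a b p * a ^ p.length := by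
  rw [encVal, add_one_mul]
  exact Nat.lt_div_mul_add (pow_pos (NeZero.pos a) _)

lemma encVal_lt (hb : 1 < b) (p : Str a) : encVal a b p < b ^ encLen a b p.length := by
  have : (encVal a b p + 1) * a ^ p.length ≤ b ^ encLen a b p.length * a ^ p.length :=
    calc (encVal a b p + 1) * a ^ p.length ≤ (strVal p + 1) * b ^ encLen a b p.length :=
          encVal_add_one_mul_le hb p
      _ ≤ a ^ p.length * b ^ encLen a b p.length := Nat.mul_le_mul_right _ (strVal_lt p)
      _ = b ^ encLen a b p.length * a ^ p.length := mul_comm _ _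
  have := Nat.le_of_mul_le_mul_right this (pow_pos (NeZero.pos a) _)
  omega

variable [NeZero b]

lemma strVal_encStr (hb : 1 < b) (p : Str a) : strVal (encStr a b p) = encVal a b p :=
  strVal_natToStr (encVal_lt hb p)

lemma eq_encStr_iff (hb : 1 < b) {p : Str a} {y : Str b} :
    y = encStr a b p ↔ y.length = encLen a b p.length ∧ strVal y = encVal a b p := by
  constructor
  · rintro rfl
    exact ⟨length_encStr p, strVal_encStr hb p⟩
  · rintro ⟨hl, hv⟩
    exact eq_of_strVal_eq (by rw [hl, length_encStr]) (by rw [hv, strVal_encStr hb])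

lemma cyl_encStr_subset (hb : 1 < b) (p : Str a) : cyl (encStr a b p) ⊆ cyl p := by
  have ha := cast_pow_pos (b := a) p.length
  have hb' := cast_pow_pos (b := b) (encLen a b p.length)
  have h₁ : (strVal p * b ^ encLen a b p.length : ℚ) < encVal a b p * a ^ p.length := by
    exact_mod_cast strVal_mul_lt_encVal_mul p
  have h₂ : ((encVal a b p + 1) * a ^ p.length : ℚ) ≤
      (strVal p + 1) * b ^ encLen a b p.length := by
    exact_mod_cast encVal_add_one_mul_le hb p
  rw [cyl, cyl, strVal_encStr hb, length_encStr]
  apply Set.Ico_subset_Ico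
  · rw [div_le_div_iff₀ ha hb']
    exact h₁.le
  · rw [div_le_div_iff₀ hb' ha]
    exact_mod_cast h₂

/-- Both `cyl p` and `cyl p'` contain the cylinder of `encStr a b p'`. -/
lemma prefix_or_prefix_of_encStr_prefix (hb : 1 < b) {p p' : Str a}
    (h : encStr a b p <+: encStr a b p') : p <+: p' ∨ p' <+: p := by
  apply prefix_or_prefix_of_cyl_inter
  refine ⟨_, cyl_encStr_subset hb p (cyl_subset_of_prefix h (left_mem_cyl _)),
    cyl_encStr_subset hb p' (left_mem_cyl _)⟩

/-- The graph of `encStr` is decided through `encLen_eq_iff`, avoiding `Nat.clog`. -/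
lemma primrec_encStr_eq (hb : 1 < b) :
    Primrec₂ fun (p : Str a) (y : Str b) => decide (encStr a b p = y) := by
  have hlen := Primrec.list_length.comp (α := Str a × Str b) Primrec.fst
  have hlen' := Primrec.list_length.comp (α := Str a × Str b) Primrec.snd
  have htwo : Primrec fun x : Str a × Str b => 2 * a ^ x.1.length :=
    Primrec.nat_mul.comp (Primrec.const 2) (primrec_pow.comp (Primrec.const a) hlen)
  have hbL : Primrec fun x : Str a × Str b => b ^ x.2.length :=
    primrec_pow.comp (Primrec.const b) hlen'
  have hrel : PrimrecRel fun (p : Str a) (y : Str b) =>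
      (2 * a ^ p.length ≤ b ^ y.length ∧ b ^ (y.length - 1) < 2 * a ^ p.length) ∧
        strVal y = strVal p * b ^ y.length / a ^ p.length + 1 :=
    ((Primrec.nat_le.comp htwo hbL).and (Primrec.nat_lt.comp
      (primrec_pow.comp (Primrec.const b) (Primrec.nat_sub.comp hlen' (Primrec.const 1))) htwo)).and
      (Primrec.eq.comp (primrec_strVal.comp Primrec.snd) (Primrec.nat_add.comp
        (Primrec.nat_div.comp (Primrec.nat_mul.comp (primrec_strVal.comp Primrec.fst) hbL)
          (primrec_pow.comp (Primrec.const a) hlen)) (Primrec.const 1)))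
  refine (hrel.of_eq fun p y => ?_).decide
  rw [@eq_comm _ (encStr a b p) y, eq_encStr_iff hb, ← encLen_eq_iff hb, encVal]
  constructor <;> rintro ⟨hl, hv⟩ <;> exact ⟨hl.symm, hl ▸ hv⟩

end Encoding

lemma PrefixFree.subset {i : ℕ} {S T : Set (Str i)} (hT : PrefixFree T) (h : S ⊆ T) :
    PrefixFree S :=
  fun x hx y hy hxy => hT x (h hx) y (h hy) hxy

section PrefixFreeEncoding

variable {a b : ℕ} [NeZero a] [NeZero b] {D : Set (Str a)}

lemma PrefixFree.injOn_encStr (hD : PrefixFree D) (hb : 1 < b) : Set.InjOn (encStr a b) D := by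
  intro p hp p' hp' h
  rcases prefix_or_prefix_of_encStr_prefix (p' := p') hb (by rw [h]) with h' | h'
  · exact hD p hp p' hp' h'
  · exact (hD p' hp' p hp h').symm

lemma PrefixFree.image_encStr (hD : PrefixFree D) (hb : 1 < b) :
    PrefixFree (encStr a b '' D) := by
  rintro _ ⟨p, hp, rfl⟩ _ ⟨p', hp', rfl⟩ h
  rcases prefix_or_prefix_of_encStr_prefix hb h with h' | h'
  · rw [hD p hp p' hp' h']
  · rw [hD p' hp' p hp h']

end PrefixFreeEncoding

section Dovetail

variable {α β σ : Type*} [Primcodable β]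

lemma Partrec.exists_primrec_dom_iff [Primcodable α] [Primcodable σ] {f : α →. σ}
    (hf : Partrec f) :
    ∃ R : α → ℕ → Bool, Primrec₂ R ∧ ∀ a, (f a).Dom ↔ ∃ t, R a t = true := by
  obtain ⟨c, hc⟩ := Nat.Partrec.Code.exists_code.1 hf
  refine ⟨fun a t => (c.evaln t (Encodable.encode a)).isSome,
    Primrec.option_isSome.comp (Nat.Partrec.Code.primrec_evaln.comp
      ((Primrec.snd.pair (Primrec.const c)).pair (Primrec.encode.comp Primrec.fst))), fun a => ?_⟩
  have heval : c.eval (Encodable.encode a) = (f a).map Encodable.encode := by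
    simp [hc, Encodable.encodek]
  simp only [Part.dom_iff_mem, Option.isSome_iff_exists, ← Option.mem_def]
  constructor
  · rintro ⟨y, hy⟩
    obtain ⟨t, ht⟩ := Nat.Partrec.Code.evaln_complete.1 (heval ▸ Part.mem_map _ hy)
    exact ⟨t, _, ht⟩
  · rintro ⟨t, n, ht⟩
    obtain ⟨y, hy, -⟩ := (Part.mem_map_iff _).1 (heval ▸ Nat.Partrec.Code.evaln_sound ht)
    exact ⟨y, hy⟩

def dovetail (R : α → β × ℕ → Bool) (a : α) : Part β :=
  Nat.rfindOpt fun k =>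
    (Encodable.decode (α := β × ℕ) k).bind fun x => bif R a x then some x.1 else none

variable {R : α → β × ℕ → Bool}

lemma partrec_dovetail [Primcodable α] (hR : Computable₂ R) : Partrec (dovetail R) :=
  Partrec.rfindOpt (Computable.option_bind (Computable.decode.comp Computable.snd)
    (Computable.cond (hR.comp (Computable.fst.comp Computable.fst) Computable.snd)
      (Computable.option_some.comp (Computable.fst.comp Computable.snd))
      (Computable.const none)).to₂)

lemma exists_of_mem_dovetail {a : α} {b : β} (h : b ∈ dovetail R a) :
    ∃ t, R a (b, t) = true := by
  obtain ⟨k, hk⟩ := Nat.rfindOpt_spec h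
  simp only [Option.mem_def, Option.bind_eq_some_iff] at hk
  obtain ⟨⟨b', t⟩, -, hx⟩ := hk
  cases hR : R a (b', t)
  · simp [hR] at hx
  · simp only [hR, cond_true, Option.some.injEq] at hx
    exact ⟨t, hx ▸ hR⟩

lemma mem_dovetail {a : α} {b : β} {t : ℕ} (h : R a (b, t) = true)
    (huniq : ∀ b' t', R a (b', t') = true → b' = b) : b ∈ dovetail R a := by
  have hdom : (dovetail R a).Dom :=
    Nat.rfindOpt_dom.2 ⟨Encodable.encode (b, t), b, by simp [Encodable.encodek, h]⟩
  obtain ⟨t', ht'⟩ := exists_of_mem_dovetail (Part.get_mem hdom)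
  exact huniq _ _ ht' ▸ Part.get_mem hdom

end Dovetail

lemma CEset.exists_partrec_invFunOn {i : ℕ} {A : Set (Str i)} (hA : CEset A) {β : Type*}
    [Primcodable β] [DecidableEq β] {φ : Str i → β}
    (hφ : Computable₂ fun u w => decide (φ u = w)) (hinj : Set.InjOn φ A) :
    ∃ G : β →. Str i, Partrec G ∧ (∀ u ∈ A, u ∈ G (φ u)) ∧
      ∀ w u, u ∈ G w → u ∈ A ∧ φ u = w := by
  obtain ⟨f, hf, rfl⟩ := hA
  obtain ⟨R, hR, hdom⟩ := hf.exists_primrec_dom_iff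
  let S : β → Str i × ℕ → Bool := fun w x => R x.1 x.2 && decide (φ x.1 = w)
  have hS : ∀ w u t, S w (u, t) = true ↔ R u t = true ∧ φ u = w := by
    simp [S]
  refine ⟨dovetail S, partrec_dovetail ?_, fun u hu => ?_, fun w u hu => ?_⟩
  · exact Primrec.and.to_comp.comp
      (hR.to_comp.comp (Computable.fst.comp Computable.snd) (Computable.snd.comp Computable.snd))
      (hφ.comp (Computable.fst.comp Computable.snd) Computable.fst)
  · obtain ⟨t, ht⟩ := (hdom u).1 hu
    refine mem_dovetail ((hS _ _ _).2 ⟨ht, rfl⟩) fun u' t' h' => ?_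
    obtain ⟨hu', hφu'⟩ := (hS _ _ _).1 h'
    exact hinj ((hdom u').2 ⟨t', hu'⟩) hu hφu'
  · obtain ⟨t, ht⟩ := exists_of_mem_dovetail hu
    obtain ⟨hu', hφu⟩ := (hS _ _ _).1 ht
    exact ⟨(hdom u).2 ⟨t, hu'⟩, hφu⟩

/-- `T` decodes its input by the partial inverse of `encStr` on the domain of `U`, on which
`encStr` is injective since that domain is prefix-free, then runs `U` and `F`. -/
lemma Machine.exists_simulation {a b : ℕ} [NeZero a] [NeZero b] (hb : 1 < b) (U : Machine a)
    {F : Str a →. Str b} (hF : Partrec F) :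
    ∃ T : Machine b, ∀ p u w, u ∈ U.f p → w ∈ F u → w ∈ T.f (encStr a b p) := by
  obtain ⟨dec, hdec, hmem, hspec⟩ := CEset.exists_partrec_invFunOn ⟨U.f, U.partrec, rfl⟩
    (primrec_encStr_eq hb).to_comp (U.prefixFree.injOn_encStr hb)
  refine ⟨⟨fun y => (dec y).bind fun p => (U.f p).bind F,
    hdec.bind ((U.partrec.comp Computable.snd).bind (hF.comp Computable.snd).to₂).to₂, ?_⟩,
    ?_⟩
  · refine (U.prefixFree.image_encStr hb).subset fun y hy => ?_
    obtain ⟨p, hp, -⟩ := Part.mem_bind_iff.1 (Part.get_mem hy)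
    obtain ⟨hpD, rfl⟩ := hspec y p hp
    exact ⟨p, hpD, rfl⟩
  · intro p u w hu hw
    exact Part.mem_bind_iff.2
      ⟨p, hmem p (Part.dom_iff_mem.2 ⟨u, hu⟩), Part.mem_bind_iff.2 ⟨u, hu, hw⟩⟩

section Complexity

variable {j : ℕ}

lemma Hc_le_length {T : Machine j} {x y : Str j} (h : x ∈ T.f y) : Hc T x ≤ y.length :=
  sInf_le ⟨y, rfl, h⟩

lemma exists_Hc_eq_length {T : Machine j} {x : Str j} (h : Hc T x ≠ ⊤) :
    ∃ y, x ∈ T.f y ∧ Hc T x = y.length := by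
  classical
  have hS : ∃ n, ∃ y : Str j, y.length = n ∧ x ∈ T.f y := by
    by_contra hne
    refine h (sInf_eq_top.2 ?_)
    rintro _ ⟨y, rfl, hy⟩
    exact absurd ⟨_, y, rfl, hy⟩ hne
  obtain ⟨y, hyl, hy⟩ := Nat.find_spec hS
  refine ⟨y, hy, le_antisymm (Hc_le_length hy) (le_sInf ?_)⟩
  rintro _ ⟨z, rfl, hz⟩
  exact_mod_cast hyl ▸ Nat.find_min' hS ⟨z, rfl, hz⟩

def Machine.const (x : Str j) : Machine j where
  f y := ((if y = [] then some x else none : Option (Str j)) : Part (Str j))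
  partrec := Computable.ofOption
    (Primrec.ite (Primrec.eq.comp Primrec.id (Primrec.const [])) (Primrec.const _)
      (Primrec.const _)).to_comp
  prefixFree y hy z hz _ := by
    obtain rfl : y = [] := by by_contra h; simp [h] at hy
    obtain rfl : z = [] := by by_contra h; simp [h] at hz
    rfl

lemma IsUniversal.Hc_ne_top {U : Machine j} (hU : IsUniversal U) (x : Str j) : Hc U x ≠ ⊤ := by
  obtain ⟨c, hc⟩ := hU (Machine.const x)
  have h : Hc (Machine.const x) x ≤ ([] : Str j).length :=
    Hc_le_length (T := Machine.const x) <| by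
      simp only [Machine.const, if_true]
      exact Part.mem_some x
  refine ne_top_of_le_ne_top ?_ ((hc x).trans (add_le_add_left h c))
  simp

lemma IsUniversal.exists_Hc_le_encLen {a b : ℕ} [NeZero a] [NeZero b] (hb : 1 < b)
    {V : Machine b} (hV : IsUniversal V) (U : Machine a) {F : Str a →. Str b} (hF : Partrec F) :
    ∃ c : ℕ, ∀ p u w, u ∈ U.f p → w ∈ F u → Hc V w ≤ (encLen a b p.length + c : ℕ) := by
  obtain ⟨T, hT⟩ := U.exists_simulation hb hF
  obtain ⟨c, hc⟩ := hV T
  refine ⟨c, fun p u w hu hw => ?_⟩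
  calc Hc V w ≤ Hc T w + c := hc w
    _ ≤ (encStr a b p).length + c := by gcongr; exact Hc_le_length (hT p u w hu hw)
    _ = (encLen a b p.length + c : ℕ) := by simp

end Complexity

lemma encLen_mul_logb_lt {a b : ℕ} [NeZero a] (hb : 1 < b) (m : ℕ) :
    (encLen a b m : ℝ) * Real.logb 2 b < 1 + m * Real.logb 2 a + Real.logb 2 b := by
  have hpos : 1 ≤ encLen a b m := Nat.clog_pos hb (one_lt_two_mul_pow m)
  have hlt : ((b ^ (encLen a b m - 1) : ℕ) : ℝ) < ((2 * a ^ m : ℕ) : ℝ) :=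
    Nat.cast_lt.2 (((encLen_eq_iff hb).1 rfl).2)
  have ha : (0 : ℝ) < a := Nat.cast_pos.2 (NeZero.pos a)
  have hlog := Real.logb_lt_logb one_lt_two (by positivity) hlt
  push_cast at hlog
  rw [Real.logb_pow, Real.logb_mul two_ne_zero (by positivity), Real.logb_self_eq_one one_lt_two,
    Real.logb_pow, Nat.cast_sub hpos, Nat.cast_one] at hlog
  linarith

lemma deltaI_of_Hc_eq {i : ℕ} {U : Machine i} {x : Str i} {n : ℕ} (h : Hc U x = n) :
    deltaI U x = ((n - x.length : ℝ) : EReal) := by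
  rw [deltaI, h, EReal.coe_sub]
  rfl

lemma deltaG_of_Hc_eq {i : ℕ} {U2 : Machine 2} {g : Str i → Str 2} {x : Str i} {m : ℕ}
    (h : Hc U2 (g x) = m) :
    deltaG U2 g x = ((m - ⌈Real.logb 2 i * x.length⌉ : ℝ) : EReal) := by
  rw [deltaG, h, EReal.coe_sub]
  rfl

/-- For a c.e. set `A` and a Gödel numbering `g : A → X₂*`, there is a constant `d`
with `|δ_g(u) − log₂(i)·δᵢ(u)| ≤ d` for all `u ∈ A`
(the absolute difference is expressed by the two inequalities). -/
theorem stmt_2 {i : ℕ} (hi : 2 ≤ i) (Ui : Machine i) (hUi : IsUniversal Ui)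
    (U2 : Machine 2) (hU2 : IsUniversal U2)
    (A : Set (Str i)) (hA : CEset A) (g : Str i → Str 2) (hg : GoedelNumbering A g) :
    ∃ d : ℝ, 0 < d ∧ ∀ u ∈ A,
      deltaG U2 g u ≤ ((Real.logb 2 i : ℝ) : EReal) * deltaI Ui u + ((d : ℝ) : EReal) ∧
      ((Real.logb 2 i : ℝ) : EReal) * deltaI Ui u ≤ deltaG U2 g u + ((d : ℝ) : EReal) := by
  have : NeZero i := ⟨by omega⟩
  obtain ⟨hgc, hginj⟩ := hg
  obtain ⟨G, hG, hGg, -⟩ := hA.exists_partrec_invFunOn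
    (Primrec.eq.decide.to_comp.comp (hgc.comp Computable.fst) Computable.snd) hginj
  obtain ⟨c₂, hc₂⟩ := hU2.exists_Hc_le_encLen one_lt_two Ui hgc.partrec
  obtain ⟨c₁, hc₁⟩ := hUi.exists_Hc_le_encLen hi U2 hG
  set L := Real.logb 2 i
  have hL : 0 ≤ L := Real.logb_nonneg one_lt_two (by exact_mod_cast NeZero.one_le)
  refine ⟨c₂ + L * (c₁ + 1) + 2, by positivity, fun u hu => ?_⟩
  obtain ⟨p, hp, hHp⟩ := exists_Hc_eq_length (hUi.Hc_ne_top u)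
  obtain ⟨q, hq, hHq⟩ := exists_Hc_eq_length (hU2.Hc_ne_top (g u))
  have hqp : (q.length : ℝ) ≤ encLen i 2 p.length + c₂ := by
    exact_mod_cast hHq ▸ hc₂ p u (g u) hp (Part.mem_some _)
  have hpq : L * p.length ≤ L * (encLen 2 i q.length + c₁) :=
    mul_le_mul_of_nonneg_left (by exact_mod_cast hHp ▸ hc₁ q (g u) u hq (hGg u hu)) hL
  have e₁ := encLen_mul_logb_lt (a := i) one_lt_two p.length
  have e₂ := encLen_mul_logb_lt (a := 2) hi q.length
  simp only [Real.logb_self_eq_one one_lt_two, mul_one, Nat.cast_ofNat] at e₁ e₂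
  have hceil := Int.le_ceil (L * u.length)
  have hceil' := Int.ceil_lt_add_one (L * u.length)
  rw [deltaG_of_Hc_eq hHq, deltaI_of_Hc_eq hHp]
  constructor <;>
  · rw [← EReal.coe_mul, ← EReal.coe_add, EReal.coe_le_coe_iff]
    nlinarith
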